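/- With χ as above, K, l₀, F_s, F_load > 0, x₁ ≤ ... ≤ x_m (m ≥ 1), c the cargo equilibrium, and suppose x₁ < c - l₀ (rearguard pulled backward). If additionally K(x_m - c - l₀) < F_s, then x_m - x₁ < (m·F_s - F_load)/K + 2l₀. -/

import Mathlib

/-- Elastic force with dead zone. -/
noncomputable def chi (K l₀ : ℝ) (l : ℝ) : ℝ :=
  if l > l₀ then K * (l - l₀) else if l < -l₀ then K * (l + l₀) else 0

lemma chi_mono (K l₀ : ℝ) (hK : 0 < K) (hl : 0 < l₀) {a b : ℝ} (hab : a ≤ b) :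
    chi K l₀ a ≤ chi K l₀ b := by
  unfold chi
  split_ifs <;> nlinarith

/-- Contrapositive core of the stalling lemma: if the rearguard is pulled backward
and the vanguard is not stalled, the spread is below `(m·F_s - F_load)/K + 2l₀`. -/
theorem spread_bound_of_not_stalled (K l₀ F Fs : ℝ) (hK : 0 < K) (hl : 0 < l₀)
    (hF : 0 < F) (hFs : 0 < Fs) (m : ℕ) (hm : 1 ≤ m) (x : Fin m → ℝ) (hx : Monotone x)
    (c : ℝ) (heq : F = ∑ i, chi K l₀ (x i - c))
    (hrear : x ⟨0, by omega⟩ < c - l₀)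
    (hnostall : K * (x ⟨m - 1, by omega⟩ - c - l₀) < Fs) :
    x ⟨m - 1, by omega⟩ - x ⟨0, by omega⟩ < (m * Fs - F) / K + 2 * l₀ := by
  set i0 : Fin m := ⟨0, by omega⟩
  set im : Fin m := ⟨m - 1, by omega⟩
  -- each chi value is ≤ Fs
  have hbound : ∀ i : Fin m, chi K l₀ (x i - c) ≤ Fs := by
    intro i
    have h1 : chi K l₀ (x i - c) ≤ chi K l₀ (x im - c) := by
      apply chi_mono K l₀ hK hl
      have : i ≤ im := by
        simp only [Fin.le_def, im, Fin.val_mk]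
        omega
      linarith [hx this]
    refine h1.trans ?_
    unfold chi
    split_ifs <;> nlinarith
  -- value at i0
  have h0 : chi K l₀ (x i0 - c) = K * (x i0 - c + l₀) := by
    unfold chi
    rw [if_neg (by linarith), if_pos (by linarith)]
  -- split sum
  have hsum : F = chi K l₀ (x i0 - c) + ∑ i ∈ Finset.univ.erase i0, chi K l₀ (x i - c) := by
    rw [heq]; exact (Finset.add_sum_erase _ _ (Finset.mem_univ i0)).symm
  have hrest : ∑ i ∈ Finset.univ.erase i0, chi K l₀ (x i - c) ≤ (m - 1 : ℝ) * Fs := by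
    have hcard : (Finset.univ.erase i0).card = m - 1 := by
      rw [Finset.card_erase_of_mem (Finset.mem_univ i0)]
      simp
    calc ∑ i ∈ Finset.univ.erase i0, chi K l₀ (x i - c)
        ≤ ∑ _i ∈ Finset.univ.erase i0, Fs := Finset.sum_le_sum fun i _ => hbound i
      _ = (m - 1 : ℕ) * Fs := by rw [Finset.sum_const, hcard, nsmul_eq_mul]
      _ = (m - 1 : ℝ) * Fs := by
          congr 1
          push_cast [hm]
          ring
  have hKx : K * (x im - x i0) < m * Fs - F + 2 * K * l₀ := by nlinarith
  rw [div_add' _ _ _ (ne_of_gt hK), lt_div_iff₀ hK]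
  nlinarith
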